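/- For each l ∈ (0,∞), the function u_l(x) = √8·l/(1 + |lx|²) belongs to H¹_r(ℝ²) and satisfies (1/4)∫_{ℝ²} |u_l|⁴ dx = ∫_{ℝ²} |∇u_l|² dx = ∫_{ℝ²} (u_l(x)²/|x|²)(∫₀^{|x|} (s/2) u_l(s)² ds)² dx = 16πl²/3; in particular, equality is attained in the inequality ∫|u|⁴ ≤ 4(∫|∇u|²)^{1/2}(∫ (u²/|x|²)(∫₀^{|x|}(s/2)u²(s)ds)² dx)^{1/2} by each u_l. -/

import Mathlib

open MeasureTheory Filter Set

noncomputable section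

/-- The plane ℝ². -/
abbrev Plane : Type := EuclideanSpace ℝ (Fin 2)

/-- The point (s, 0) in the plane. -/
def pt (s : ℝ) : Plane := (EuclideanSpace.equiv (Fin 2) ℝ).symm ![s, 0]

/-- Radial profile of a function on the plane: `prof u s = u (s, 0)`. -/
def prof (u : Plane → ℝ) (s : ℝ) : ℝ := u (pt s)

/-- A function on the plane is radially symmetric. -/
def Radial (u : Plane → ℝ) : Prop := ∀ x y : Plane, ‖x‖ = ‖y‖ → u x = u y

/-- `h_u(s) = ∫₀ˢ (r/2) u(r)² dr`. -/
def hfun (u : Plane → ℝ) (s : ℝ) : ℝ := ∫ r in (0:ℝ)..s, r / 2 * (prof u r) ^ 2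

/-- `B(u) = ∫_{ℝ²} (u(x)²/|x|²) h_u(|x|)² dx`. -/
def Bfun (u : Plane → ℝ) : ℝ := ∫ x : Plane, (u x) ^ 2 / ‖x‖ ^ 2 * (hfun u ‖x‖) ^ 2

/-- The Fréchet derivative of `B` at `u` applied to `φ`. -/
def Bderiv (u φ : Plane → ℝ) : ℝ :=
  ∫ x : Plane, (2 * u x * φ x / ‖x‖ ^ 2 * (hfun u ‖x‖) ^ 2
    + (u x) ^ 2 / ‖x‖ ^ 2 * (2 * hfun u ‖x‖ * ∫ r in (0:ℝ)..‖x‖, r * prof u r * prof φ r))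

/-- Membership in `H¹_r(ℝ²)`: radially symmetric with `u` and `∇u` in `L²`. -/
def MemH1r (u : Plane → ℝ) : Prop :=
  Radial u ∧ MemLp u 2 (volume : Measure Plane) ∧
    MemLp (fun x => gradient u x) 2 (volume : Measure Plane)

/-- The squared `H¹` norm. -/
def H1normSq (u : Plane → ℝ) : ℝ :=
  (∫ x : Plane, ‖gradient u x‖ ^ 2) + ∫ x : Plane, (u x) ^ 2

/-- The `H¹` norm. -/
def H1norm (u : Plane → ℝ) : ℝ := Real.sqrt (H1normSq u)

/-- The `H¹` inner product. -/
def H1inner (u v : Plane → ℝ) : ℝ :=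
  (∫ x : Plane, (inner ℝ (gradient u x) (gradient v x) : ℝ)) + ∫ x : Plane, u x * v x

/-- Weak convergence in `H¹_r(ℝ²)`. -/
def WeakConvH1r (U : ℕ → Plane → ℝ) (u : Plane → ℝ) : Prop :=
  (∀ n, MemH1r (U n)) ∧ MemH1r u ∧
    ∀ φ, MemH1r φ → Tendsto (fun n => H1inner (U n) φ) atTop (nhds (H1inner u φ))

/-- Membership of a pair in `E = H¹_r × H¹_r`. -/
def MemE (u v : Plane → ℝ) : Prop := MemH1r u ∧ MemH1r v

/-- The squared `E`-norm: `∫ (|∇u|² + u² + |∇v|² + ω v²)`. -/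
def Enorm2 (ω : ℝ) (u v : Plane → ℝ) : ℝ :=
  ∫ x : Plane, (‖gradient u x‖ ^ 2 + (u x) ^ 2 + ‖gradient v x‖ ^ 2 + ω * (v x) ^ 2)

/-- `F(u,v) = ∫ (|u|^{2p} + |v|^{2p} + 2b|uv|^p)`. -/
def Ffun (b p : ℝ) (u v : Plane → ℝ) : ℝ :=
  ∫ x : Plane, (|u x| ^ (2 * p) + |v x| ^ (2 * p) + 2 * b * |u x * v x| ^ p)

/-- The energy functional `I` of the coupled system. -/
def Ifun (ω b p : ℝ) (u v : Plane → ℝ) : ℝ :=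
  Enorm2 ω u v / 2 + (Bfun u + Bfun v) / 2 - Ffun b p u v / (2 * p)

/-- The derivative `I'(u,v)(φ,ψ)`. -/
def Iprime (ω b p : ℝ) (u v φ ψ : Plane → ℝ) : ℝ :=
  (∫ x : Plane, ((inner ℝ (gradient u x) (gradient φ x) : ℝ) + u x * φ x
      + (inner ℝ (gradient v x) (gradient ψ x) : ℝ) + ω * v x * ψ x))
  + (Bderiv u φ + Bderiv v ψ) / 2
  - ∫ x : Plane, (|u x| ^ (2 * p - 2) * u x * φ x + |v x| ^ (2 * p - 2) * v x * ψ x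
      + b * |v x| ^ p * |u x| ^ (p - 2) * u x * φ x
      + b * |u x| ^ p * |v x| ^ (p - 2) * v x * ψ x)

/-- `(u,v)` is a (weak) solution of the coupled Chern–Simons–Schrödinger system (CSS),
i.e. a critical point of `I` on `E`. -/
def IsSolutionCSS (ω b p : ℝ) (u v : Plane → ℝ) : Prop :=
  MemH1r u ∧ MemH1r v ∧
    ∀ φ ψ : Plane → ℝ, MemH1r φ → MemH1r ψ → Iprime ω b p u v φ ψ = 0

/-- `u` is a nontrivial function. -/
def NontrivialFn (u : Plane → ℝ) : Prop := ¬ ∀ x, u x = 0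

/-- `(u,v)` is a ground state of (CSS): a nontrivial solution minimizing `I`
among all nontrivial solutions. -/
def IsGroundStateCSS (ω b p : ℝ) (u v : Plane → ℝ) : Prop :=
  IsSolutionCSS ω b p u v ∧ NontrivialFn u ∧ NontrivialFn v ∧
    ∀ u' v' : Plane → ℝ, IsSolutionCSS ω b p u' v' → NontrivialFn u' → NontrivialFn v' →
      Ifun ω b p u v ≤ Ifun ω b p u' v'

/-- The energy functional `J_ω` of the single equation `(S_ω)`. -/
def Jfun (ω p : ℝ) (u : Plane → ℝ) : ℝ :=
  (∫ x : Plane, (‖gradient u x‖ ^ 2 + ω * (u x) ^ 2)) / 2 + Bfun u / 2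
    - (∫ x : Plane, |u x| ^ (2 * p)) / (2 * p)

/-- The derivative `J_ω'(u)φ`. -/
def JprimeS (ω p : ℝ) (u φ : Plane → ℝ) : ℝ :=
  (∫ x : Plane, ((inner ℝ (gradient u x) (gradient φ x) : ℝ) + ω * u x * φ x))
    + Bderiv u φ / 2 - ∫ x : Plane, |u x| ^ (2 * p - 2) * u x * φ x

/-- `u` is a (weak) solution of the single equation `(S_ω)`, i.e. `J_ω'(u) = 0`. -/
def IsSolutionS (ω p : ℝ) (u : Plane → ℝ) : Prop :=
  MemH1r u ∧ ∀ φ : Plane → ℝ, MemH1r φ → JprimeS ω p u φ = 0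

/-- The Nehari manifold `N_ω` of the single equation (case `p > 3`). -/
def NehariS (ω p : ℝ) (u : Plane → ℝ) : Prop :=
  MemH1r u ∧ NontrivialFn u ∧
    (∫ x : Plane, (‖gradient u x‖ ^ 2 + ω * (u x) ^ 2)) + 3 * Bfun u
      = ∫ x : Plane, |u x| ^ (2 * p)

/-- The ground state level `E_ω = inf {J_ω(u) : u ∈ N_ω}` (case `p > 3`). -/
def Elevel (ω p : ℝ) : ℝ := sInf (Jfun ω p '' {u | NehariS ω p u})

/-- `‖u‖_{2p}^{2p} = ∫ |u|^{2p}`. -/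
def norm2p (p : ℝ) (u : Plane → ℝ) : ℝ := ∫ x : Plane, |u x| ^ (2 * p)

/-- The Nehari manifold `N` of the coupled system. -/
def NehariC (ω b p : ℝ) (u v : Plane → ℝ) : Prop :=
  MemE u v ∧ ¬ ((∀ x, u x = 0) ∧ (∀ x, v x = 0)) ∧
    Enorm2 ω u v + 3 * (Bfun u + Bfun v) = Ffun b p u v

/-- The ground state level `c_N = inf_{(u,v) ∈ N} I(u,v)`. -/
def cN (ω b p : ℝ) : ℝ := sInf {y | ∃ u v, NehariC ω b p u v ∧ y = Ifun ω b p u v}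

/-- The admissible range of the scaling parameter `α`. -/
def AlphaOK (p α : ℝ) : Prop :=
  (p < 3 → 1 / (p - 1) < α ∧ α < 1 / (3 - p)) ∧ (p = 3 → 1 < α)

/-- The scaling `t^α u(t ·)`. -/
def scaleFn (α t : ℝ) (u : Plane → ℝ) : Plane → ℝ := fun x => t ^ α * u (t • x)

/-- The Pohozaev–Nehari functional `J(u,v)` of the coupled system. -/
def Jc (ω b p α : ℝ) (u v : Plane → ℝ) : ℝ :=
  α * ((∫ x : Plane, ‖gradient u x‖ ^ 2) + ∫ x : Plane, ‖gradient v x‖ ^ 2)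
  + (α - 1) * ((∫ x : Plane, (u x) ^ 2) + ω * ∫ x : Plane, (v x) ^ 2)
  + (3 * α - 2) * (Bfun u + Bfun v) - (p * α - 1) / p * Ffun b p u v

/-- Membership in the Pohozaev–Nehari manifold `M_b`. -/
def MemMb (ω b p α : ℝ) (u v : Plane → ℝ) : Prop :=
  MemE u v ∧ ¬ ((∀ x, u x = 0) ∧ (∀ x, v x = 0)) ∧ Jc ω b p α u v = 0

/-- The level `c_b = inf_{(u,v) ∈ M_b} I(u,v)`. -/
def cb (ω b p α : ℝ) : ℝ := sInf {y | ∃ u v, MemMb ω b p α u v ∧ y = Ifun ω b p u v}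

/-- The Pohozaev–Nehari manifold `M_ω` of the single equation (case `p ∈ (2,3]`). -/
def Mω (ω p α : ℝ) (u : Plane → ℝ) : Prop :=
  MemH1r u ∧ NontrivialFn u ∧
    α * (∫ x : Plane, ‖gradient u x‖ ^ 2) + (α - 1) * ω * (∫ x : Plane, (u x) ^ 2)
      + (3 * α - 2) * Bfun u = (p * α - 1) / p * ∫ x : Plane, |u x| ^ (2 * p)

/-- The ground state level `Ẽ_ω = inf {J_ω(u) : u ∈ M_ω}` (case `p ∈ (2,3]`). -/
def Etilde (ω p α : ℝ) : ℝ := sInf (Jfun ω p '' {u | Mω ω p α u})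

/-- The set `S_ω` of ground states of the single equation at level `Ẽ_ω`. -/
def Sset (ω p α : ℝ) : Set (Plane → ℝ) :=
  {u | IsSolutionS ω p u ∧ NontrivialFn u ∧ Jfun ω p u = Etilde ω p α}

/-- The `δ`-neighborhood `(S_ω)^δ` of `S_ω` in `H¹_r(ℝ²)`. -/
def Sdelta (ω p α δ : ℝ) : Set (Plane → ℝ) :=
  {u | ∃ w ∈ Sset ω p α, H1norm (fun x => u x - w x) ≤ δ}

/-- The derivative `F'(u,v)(φ,ψ)` of `F`. -/
def Fprime (b p : ℝ) (u v φ ψ : Plane → ℝ) : ℝ :=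
  ∫ x : Plane, (2 * p * |u x| ^ (2 * p - 2) * u x * φ x
    + 2 * p * |v x| ^ (2 * p - 2) * v x * ψ x
    + 2 * b * p * (|v x| ^ p * |u x| ^ (p - 2) * u x * φ x
        + |u x| ^ p * |v x| ^ (p - 2) * v x * ψ x))

/-- The derivative `J'(u,v)(φ,ψ)` of the Pohozaev–Nehari functional. -/
def Jcprime (ω b p α : ℝ) (u v φ ψ : Plane → ℝ) : ℝ :=
  2 * α * (∫ x : Plane, ((inner ℝ (gradient u x) (gradient φ x) : ℝ)
      + (inner ℝ (gradient v x) (gradient ψ x) : ℝ)))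
  + 2 * (α - 1) * (∫ x : Plane, (u x * φ x + ω * v x * ψ x))
  + (3 * α - 2) * (Bderiv u φ + Bderiv v ψ) - (p * α - 1) / p * Fprime b p u v φ ψ

/-- The extremal functions `u_l(x) = √8 l / (1 + |lx|²)`. -/
def ulfn (l : ℝ) : Plane → ℝ := fun x => Real.sqrt 8 * l / (1 + ‖l • x‖ ^ 2)

/-! The extremals `u_l` solve the self-dual equation: since `h_{u_l}(s) = 2l²s²/(1 + l²s²)`,
one has `|∇u_l(x)|² = u_l(x)² h_{u_l}(|x|)² / |x|²` pointwise, so `∫|∇u_l|² = B(u_l)` without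
evaluating either. In polar coordinates `∫|∇u_l|²` and `∫|u_l|⁴` become `∫₀^∞ r³/(1 + l²r²)⁴` and
`∫₀^∞ r/(1 + l²r²)⁴`, evaluated through explicit antiderivatives in powers of `(1 + l²r²)⁻¹`. -/

open Real

theorem integral_fun_norm_euclideanSpace_two (f : ℝ → ℝ) :
    ∫ x : EuclideanSpace ℝ (Fin 2), f ‖x‖ = 2 * π * ∫ r in Ioi (0:ℝ), r * f r := by
  rw [integral_fun_norm_addHaar volume f, finrank_euclideanSpace_fin, measureReal_def,
    EuclideanSpace.volume_ball]
  norm_num [Real.Gamma_two, Real.sq_sqrt Real.pi_pos.le, ENNReal.toReal_ofReal Real.pi_pos.le]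
  ring

theorem HasDerivAt.hasGradientAt_comp_norm_sq {E : Type*} [NormedAddCommGroup E]
    [InnerProductSpace ℝ E] [CompleteSpace E] {ψ : ℝ → ℝ} {ψ' : ℝ} {x : E}
    (h : HasDerivAt ψ ψ' (‖x‖ ^ 2)) :
    HasGradientAt (fun y => ψ (‖y‖ ^ 2)) ((2 * ψ') • x) x := by
  rw [hasGradientAt_iff_hasFDerivAt]
  refine (h.comp_hasFDerivAt x (hasStrictFDerivAt_norm_sq x).hasFDerivAt).congr_fderiv ?_
  ext v
  simp only [smul_apply, coe_innerSL_apply, nsmul_eq_mul, Nat.cast_ofNat,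
    smul_eq_mul, map_smul, InnerProductSpace.toDual_apply_apply]
  ring

theorem hasDerivAt_one_add_mul_sq (c r : ℝ) :
    HasDerivAt (fun r : ℝ => 1 + c * r ^ 2) (2 * c * r) r := by
  simpa using (((hasDerivAt_pow 2 r).const_mul c).const_add 1).congr_deriv (by ring)

section Radial

variable {c : ℝ}

theorem hasDerivAt_inv_one_add_mul_sq (hc : 0 ≤ c) (r : ℝ) :
    HasDerivAt (fun r : ℝ => (1 + c * r ^ 2)⁻¹) (-(2 * c * r) / (1 + c * r ^ 2) ^ 2) r :=
  (hasDerivAt_one_add_mul_sq c r).inv (by positivity)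

theorem tendsto_inv_one_add_mul_sq_atTop (hc : 0 < c) :
    Tendsto (fun r : ℝ => (1 + c * r ^ 2)⁻¹) atTop (nhds 0) :=
  tendsto_inv_atTop_zero.comp <| tendsto_atTop_add_const_left _ _ <|
    (tendsto_pow_atTop two_ne_zero).const_mul_atTop hc

theorem integral_Ioi_div_one_add_mul_sq_pow_four (hc : 0 < c) :
    ∫ r in Ioi (0:ℝ), r / (1 + c * r ^ 2) ^ 4 = 1 / (6 * c) := by
  have hq (r : ℝ) : 1 + c * r ^ 2 ≠ 0 := by positivity
  have key := integral_Ioi_of_hasDerivAt_of_nonneg' (a := 0) (l := 0)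
    (g := fun r => -(6 * c)⁻¹ * (1 + c * r ^ 2)⁻¹ ^ 3) (g' := fun r => r / (1 + c * r ^ 2) ^ 4)
    (fun r _ => by
      refine (((hasDerivAt_inv_one_add_mul_sq hc.le r).pow 3).const_mul _).congr_deriv ?_
      have := hq r
      simp only [inv_pow]
      field_simp
      ring)
    (fun r hr => by have : 0 < r := hr; positivity)
    (by simpa using ((tendsto_inv_one_add_mul_sq_atTop hc).pow 3).const_mul (-(6 * c)⁻¹))
  simpa using key

theorem integral_Ioi_pow_three_div_one_add_mul_sq_pow_four (hc : 0 < c) :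
    ∫ r in Ioi (0:ℝ), r ^ 3 / (1 + c * r ^ 2) ^ 4 = 1 / (12 * c ^ 2) := by
  have hq (r : ℝ) : 1 + c * r ^ 2 ≠ 0 := by positivity
  have key := integral_Ioi_of_hasDerivAt_of_nonneg' (a := 0) (l := 0)
    (g := fun r => -(4 * c ^ 2)⁻¹ * (1 + c * r ^ 2)⁻¹ ^ 2 + (6 * c ^ 2)⁻¹ * (1 + c * r ^ 2)⁻¹ ^ 3)
    (g' := fun r => r ^ 3 / (1 + c * r ^ 2) ^ 4)
    (fun r _ => by
      have hinv := hasDerivAt_inv_one_add_mul_sq hc.le r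
      refine (((hinv.pow 2).const_mul _).add ((hinv.pow 3).const_mul _)).congr_deriv ?_
      have := hq r
      simp only [inv_pow]
      field_simp
      ring)
    (fun r hr => by have : 0 < r := hr; positivity)
    (by
      have hlim := tendsto_inv_one_add_mul_sq_atTop hc
      convert ((hlim.pow 2).const_mul (-(4 * c ^ 2)⁻¹)).add ((hlim.pow 3).const_mul (6 * c ^ 2)⁻¹)
        using 2
      simp)
  rw [key]
  field_simp
  ring

end Radial

section Extremal

variable (l : ℝ)

theorem ulfn_apply (x : Plane) : ulfn l x = √8 * l / (1 + l ^ 2 * ‖x‖ ^ 2) := by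
  simp [ulfn, norm_smul, mul_pow]

theorem ulfn_sq (x : Plane) : ulfn l x ^ 2 = 8 * l ^ 2 / (1 + l ^ 2 * ‖x‖ ^ 2) ^ 2 := by
  rw [ulfn_apply, div_pow, mul_pow, Real.sq_sqrt (by norm_num)]

theorem abs_ulfn_pow_four (x : Plane) :
    |ulfn l x| ^ 4 = 64 * l ^ 4 / (1 + l ^ 2 * ‖x‖ ^ 2) ^ 4 := by
  rw [Even.pow_abs ⟨2, rfl⟩, show ulfn l x ^ 4 = (ulfn l x ^ 2) ^ 2 by ring, ulfn_sq, div_pow,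
    ← pow_mul]
  ring

theorem continuous_ulfn : Continuous (ulfn l) := by
  unfold ulfn
  exact continuous_const.div (by fun_prop) fun x => by positivity

theorem hasGradientAt_ulfn (x : Plane) :
    HasGradientAt (ulfn l) ((-2 * √8 * l ^ 3 / (1 + l ^ 2 * ‖x‖ ^ 2) ^ 2) • x) x := by
  have hψ : HasDerivAt (fun t => √8 * l / (1 + l ^ 2 * t))
      (-(√8 * l * l ^ 2) / (1 + l ^ 2 * ‖x‖ ^ 2) ^ 2) (‖x‖ ^ 2) := by
    simpa [Pi.div_def] using (hasDerivAt_const _ (√8 * l)).div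
      (((hasDerivAt_id _).const_mul (l ^ 2)).const_add 1) (by simp only [id_eq]; positivity)
  convert hψ.hasGradientAt_comp_norm_sq using 1
  · exact funext (ulfn_apply l)
  · congr 1
    ring

theorem gradient_ulfn (x : Plane) :
    gradient (ulfn l) x = (-2 * √8 * l ^ 3 / (1 + l ^ 2 * ‖x‖ ^ 2) ^ 2) • x :=
  (hasGradientAt_ulfn l x).gradient

theorem continuous_gradient_ulfn : Continuous (gradient (ulfn l)) := by
  have hq : Continuous fun x : Plane => (1 + l ^ 2 * ‖x‖ ^ 2) ^ 2 := by fun_prop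
  rw [funext (gradient_ulfn l)]
  exact (continuous_const.div hq fun x => by positivity).smul continuous_id

theorem norm_gradient_ulfn_sq (x : Plane) :
    ‖gradient (ulfn l) x‖ ^ 2 = 32 * l ^ 6 * ‖x‖ ^ 2 / (1 + l ^ 2 * ‖x‖ ^ 2) ^ 4 := by
  rw [gradient_ulfn, norm_smul, mul_pow, Real.norm_eq_abs, sq_abs, div_pow, mul_pow, mul_pow,
    Real.sq_sqrt (by norm_num)]
  ring

theorem prof_ulfn (r : ℝ) : prof (ulfn l) r = √8 * l / (1 + l ^ 2 * r ^ 2) := by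
  have hpt : ‖pt r‖ = |r| := by
    simp [pt, EuclideanSpace.norm_eq, Fin.sum_univ_two, Real.sqrt_sq_eq_abs]
  rw [prof, ulfn_apply, hpt, sq_abs]

theorem hfun_ulfn (s : ℝ) : hfun (ulfn l) s = 2 * l ^ 2 * s ^ 2 / (1 + l ^ 2 * s ^ 2) := by
  have hq (r : ℝ) : 1 + l ^ 2 * r ^ 2 ≠ 0 := by positivity
  have hderiv (r : ℝ) : HasDerivAt (fun r => 2 * l ^ 2 * r ^ 2 / (1 + l ^ 2 * r ^ 2))
      (r / 2 * prof (ulfn l) r ^ 2) r := by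
    refine (((hasDerivAt_pow 2 r).const_mul (2 * l ^ 2)).div
      (hasDerivAt_one_add_mul_sq (l ^ 2) r) (hq r)).congr_deriv ?_
    rw [prof_ulfn, div_pow, mul_pow, Real.sq_sqrt (by norm_num)]
    field_simp
    ring
  have hcont : Continuous fun r => r / 2 * prof (ulfn l) r ^ 2 := by
    simp only [prof_ulfn]
    exact (continuous_id.div_const 2).mul ((continuous_const.div (by fun_prop) hq).pow 2)
  rw [hfun, intervalIntegral.integral_eq_sub_of_hasDerivAt (fun r _ => hderiv r)
    (hcont.intervalIntegrable 0 s)]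
  simp

theorem norm_gradient_ulfn_sq_eq (x : Plane) :
    ‖gradient (ulfn l) x‖ ^ 2 = ulfn l x ^ 2 / ‖x‖ ^ 2 * hfun (ulfn l) ‖x‖ ^ 2 := by
  rw [norm_gradient_ulfn_sq, ulfn_sq, hfun_ulfn]
  rcases eq_or_ne ‖x‖ 0 with hx | hx
  · simp [hx]
  · field_simp
    ring

theorem Bfun_ulfn_eq_integral_norm_gradient_sq : Bfun (ulfn l) = ∫ x : Plane, ‖gradient (ulfn l) x‖ ^ 2 := by
  simp only [Bfun, norm_gradient_ulfn_sq_eq]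

theorem integral_norm_gradient_ulfn_sq (hl : l ≠ 0) :
    ∫ x : Plane, ‖gradient (ulfn l) x‖ ^ 2 = 16 * π * l ^ 2 / 3 := by
  have hradial (r : ℝ) : r * (32 * l ^ 6 * r ^ 2 / (1 + l ^ 2 * r ^ 2) ^ 4)
      = 32 * l ^ 6 * (r ^ 3 / (1 + l ^ 2 * r ^ 2) ^ 4) := by ring
  simp only [norm_gradient_ulfn_sq]
  rw [integral_fun_norm_euclideanSpace_two (fun r => 32 * l ^ 6 * r ^ 2 / (1 + l ^ 2 * r ^ 2) ^ 4)]
  simp only [hradial, integral_const_mul,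
    integral_Ioi_pow_three_div_one_add_mul_sq_pow_four (pow_two_pos_of_ne_zero hl)]
  field_simp
  ring

theorem integral_abs_ulfn_pow_four (hl : l ≠ 0) :
    ∫ x : Plane, |ulfn l x| ^ 4 = 64 * π * l ^ 2 / 3 := by
  have hradial (r : ℝ) : r * (64 * l ^ 4 / (1 + l ^ 2 * r ^ 2) ^ 4)
      = 64 * l ^ 4 * (r / (1 + l ^ 2 * r ^ 2) ^ 4) := by ring
  simp only [abs_ulfn_pow_four]
  rw [integral_fun_norm_euclideanSpace_two (fun r => 64 * l ^ 4 / (1 + l ^ 2 * r ^ 2) ^ 4)]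
  simp only [hradial, integral_const_mul,
    integral_Ioi_div_one_add_mul_sq_pow_four (pow_two_pos_of_ne_zero hl)]
  field_simp
  ring

theorem integrable_ulfn_sq : Integrable (fun x : Plane => ulfn l x ^ 2) := by
  rcases eq_or_ne l 0 with rfl | hl
  · simp [ulfn]
  have hdecay : Integrable (fun y : Plane => (1 + ‖y‖ ^ 2) ^ (-4 / 2 : ℝ)) :=
    integrable_rpow_neg_one_add_norm_sq (by norm_num [finrank_euclideanSpace])
  refine ((hdecay.comp_smul hl).const_mul (8 * l ^ 2)).congr (ae_of_all _ fun x => ?_)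
  simp only [ulfn, div_pow, mul_pow, Real.sq_sqrt (show (0:ℝ) ≤ 8 by norm_num)]
  rw [show (-4 / 2 : ℝ) = ((-2 : ℤ) : ℝ) by norm_num, Real.rpow_intCast, zpow_neg, zpow_ofNat,
    div_eq_mul_inv]

theorem norm_gradient_ulfn_sq_le (x : Plane) :
    ‖gradient (ulfn l) x‖ ^ 2 ≤ 4 * l ^ 2 * ulfn l x ^ 2 := by
  have hq : 0 < 1 + l ^ 2 * ‖x‖ ^ 2 := by positivity
  rw [norm_gradient_ulfn_sq, ulfn_sq, div_le_iff₀ (by positivity)]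
  have hle : l ^ 2 * ‖x‖ ^ 2 ≤ (1 + l ^ 2 * ‖x‖ ^ 2) ^ 2 := by nlinarith
  calc 32 * l ^ 6 * ‖x‖ ^ 2 = 32 * l ^ 4 * (l ^ 2 * ‖x‖ ^ 2) := by ring
    _ ≤ 32 * l ^ 4 * (1 + l ^ 2 * ‖x‖ ^ 2) ^ 2 := by gcongr
    _ = 4 * l ^ 2 * (8 * l ^ 2 / (1 + l ^ 2 * ‖x‖ ^ 2) ^ 2) * (1 + l ^ 2 * ‖x‖ ^ 2) ^ 4 := by
      field_simp
      ring

theorem memH1r_ulfn : MemH1r (ulfn l) := by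
  refine ⟨fun x y hxy => by rw [ulfn_apply, ulfn_apply, hxy], ?_, ?_⟩
  · exact (memLp_two_iff_integrable_sq (continuous_ulfn l).aestronglyMeasurable).2
      (integrable_ulfn_sq l)
  · refine (memLp_two_iff_integrable_sq_norm
      (continuous_gradient_ulfn l).aestronglyMeasurable).2 ?_
    refine ((integrable_ulfn_sq l).const_mul (4 * l ^ 2)).mono'
      ((continuous_gradient_ulfn l).norm.pow 2).aestronglyMeasurable (ae_of_all _ fun x => ?_)
    rw [Real.norm_of_nonneg (by positivity)]
    exact norm_gradient_ulfn_sq_le l x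

end Extremal

/-- each `u_l`, `l > 0`, lies in `H¹_r(ℝ²)` and satisfies
`(1/4)∫|u_l|⁴ = ∫|∇u_l|² = B(u_l) = 16πl²/3`; in particular it attains equality
in the inequality of Lemma 2.2. -/
theorem stmt6 (l : ℝ) (hl : 0 < l) :
    MemH1r (ulfn l) ∧
    (1 / 4) * (∫ x : Plane, |ulfn l x| ^ (4:ℕ)) = (∫ x : Plane, ‖gradient (ulfn l) x‖ ^ 2) ∧
    (∫ x : Plane, ‖gradient (ulfn l) x‖ ^ 2) = Bfun (ulfn l) ∧
    Bfun (ulfn l) = 16 * Real.pi * l ^ 2 / 3 ∧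
    (∫ x : Plane, |ulfn l x| ^ (4:ℕ))
      = 4 * Real.sqrt (∫ x : Plane, ‖gradient (ulfn l) x‖ ^ 2) * Real.sqrt (Bfun (ulfn l)) := by
  have hgrad := integral_norm_gradient_ulfn_sq l hl.ne'
  have hu4 := integral_abs_ulfn_pow_four l hl.ne'
  have hB : Bfun (ulfn l) = 16 * π * l ^ 2 / 3 := (Bfun_ulfn_eq_integral_norm_gradient_sq l).trans hgrad
  refine ⟨memH1r_ulfn l, ?_, (Bfun_ulfn_eq_integral_norm_gradient_sq l).symm, hB, ?_⟩
  · rw [hu4, hgrad]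
    ring
  · rw [hu4, hgrad, hB, mul_assoc 4, Real.mul_self_sqrt (by positivity)]
    ring
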